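/- For every integer n ≥ 0, the following identity holds in ℚ: S₂(n) = −2^{2n+1} · 3^{4n+2} · (1/2 − n)_{2n+1} · Σ_{k=0}^{2n+1} [ (−2n−1)_k · (n + 3/2)_k / ( (1/2 − n)_k · k! ) ] · (1/9)^k. -/

import Mathlib

open Finset

/-- The rising factorial `(a)_k = a(a+1)⋯(a+k-1)`, with `(a)_0 = 1`. -/
def risingFactorial (a : ℚ) (k : ℕ) : ℚ := ∏ i ∈ range k, (a + i)

/-- `S₂(n) = Σ_{k=0}^{2n+1} C(2n+1,k)·(∏_{j=1}^{2n+1}(6n-2k+5-2j))·(-1)^k·3^(2k)`. -/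
def S₂ (n : ℕ) : ℤ :=
  ∑ k ∈ range (2 * n + 2), ((2 * n + 1).choose k : ℤ) *
    (∏ j ∈ Icc 1 (2 * n + 1), (6 * (n : ℤ) - 2 * (k : ℤ) + 5 - 2 * (j : ℤ))) *
    (-1) ^ k * 3 ^ (2 * k)

/-!
Write `N = 2n+1` and `b = n + 3/2`, so that `1/2 - n = b - N`. The product in `S₂` is
`2^N (b-k)_N`. Reversing the summation `k ↦ m = N - k`, the series term becomes a multiple of the
`k`-th summand of `S₂`: `(-N)_m / m! = (-1)^m C(N,k)`, and both `(b-N)_N = (b-N)_m (b-k)_k` and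
`(b-k)_N = (b-k)_k (b)_m`, so after cancelling `(b-N)_m` only the binomial summand remains.
-/

open Polynomial

lemma risingFactorial_eq_eval_ascPochhammer (a : ℚ) (k : ℕ) :
    risingFactorial a k = (ascPochhammer ℚ k).eval a := by
  induction k with
  | zero => simp [risingFactorial]
  | succ k ih =>
    rw [risingFactorial, prod_range_succ, ← risingFactorial, ih, ascPochhammer_succ_eval]

lemma risingFactorial_add (a : ℚ) (j k : ℕ) :
    risingFactorial a (j + k) = risingFactorial a j * risingFactorial (a + j) k := by
  simp [risingFactorial_eq_eval_ascPochhammer, ← ascPochhammer_mul, eval_comp]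

lemma risingFactorial_neg_natCast (N m : ℕ) :
    risingFactorial (-N) m = (-1) ^ m * m.factorial * N.choose m := by
  rw [risingFactorial_eq_eval_ascPochhammer, ascPochhammer_eval_neg_eq_descPochhammer,
    descPochhammer_eval_eq_descFactorial, Nat.descFactorial_eq_factorial_mul_choose]
  push_cast
  ring

lemma risingFactorial_intCast_add_half_ne_zero (j : ℤ) (k : ℕ) :
    risingFactorial (j + 1 / 2) k ≠ 0 := by
  rw [risingFactorial_eq_eval_ascPochhammer, Ne, ascPochhammer_eval_eq_zero_iff]
  rintro ⟨i, -, hi⟩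
  have hodd : ((2 * i + 2 * j + 1 : ℤ) : ℚ) = 0 := by push_cast; linarith
  have : (2 * i + 2 * j + 1 : ℤ) = 0 := by exact_mod_cast hodd
  omega

lemma prod_Icc_two_mul_eq_risingFactorial (x : ℚ) (N : ℕ) :
    ∏ j ∈ Icc 1 N, (2 * x + 2 * N - 2 * j) = 2 ^ N * risingFactorial x N := by
  calc ∏ j ∈ Icc 1 N, (2 * x + 2 * N - 2 * j) = ∏ i ∈ range N, 2 * (x + i) := by
        refine prod_nbij' (N - ·) (N - ·) ?_ ?_ ?_ ?_ ?_
        · intro j hj; simp only [mem_Icc, mem_range] at hj ⊢; omega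
        · intro i hi; simp only [mem_Icc, mem_range] at hi ⊢; omega
        · intro j hj; simp only [mem_Icc] at hj; omega
        · intro i hi; simp only [mem_range] at hi; omega
        · intro j hj
          push_cast [Nat.cast_sub (mem_Icc.mp hj).2]
          ring
    _ = 2 ^ N * risingFactorial x N := by
        rw [prod_mul_distrib, prod_const, card_range, risingFactorial]

lemma S₂_eq_sum_risingFactorial (n : ℕ) :
    (S₂ n : ℚ) = 2 ^ (2 * n + 1) * ∑ k ∈ range (2 * n + 2),
      ((2 * n + 1).choose k : ℚ) * (-9) ^ k * risingFactorial (n + 3 / 2 - k) (2 * n + 1) := by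
  rw [S₂, mul_sum]
  push_cast
  refine sum_congr rfl fun k _ => ?_
  have hprod : ∏ j ∈ Icc 1 (2 * n + 1), (6 * (n : ℚ) - 2 * k + 5 - 2 * j)
      = 2 ^ (2 * n + 1) * risingFactorial (n + 3 / 2 - k) (2 * n + 1) := by
    rw [← prod_Icc_two_mul_eq_risingFactorial]
    refine prod_congr rfl fun j _ => ?_
    push_cast
    ring
  rw [hprod, pow_mul, neg_pow (9 : ℚ)]
  ring

lemma choose_mul_risingFactorial_eq_hypergeometric_term (b z : ℚ) (hz : z ≠ 0) {N k m : ℕ}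
    (hkm : k + m = N) (hm : risingFactorial (b - N) m ≠ 0) :
    (N.choose k : ℚ) * (-z) ^ k * risingFactorial (b - k) N
      = (-1) ^ N * z ^ N * risingFactorial (b - N) N
        * (risingFactorial (-N) m * risingFactorial b m
          / (risingFactorial (b - N) m * m.factorial) * (1 / z) ^ m) := by
  subst hkm
  push_cast at hm ⊢
  have hneg : risingFactorial (-(k + m)) m = (-1) ^ m * m.factorial * (k + m).choose k := by
    rw [← Nat.cast_add, risingFactorial_neg_natCast, Nat.choose_symm_add]
  have hsplit_left : risingFactorial (b - (k + m)) (k + m)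
      = risingFactorial (b - (k + m)) m * risingFactorial (b - k) k := by
    rw [add_comm k m, risingFactorial_add, show b - (k + m) + m = b - k by ring]
  have hsplit_right : risingFactorial (b - k) (k + m)
      = risingFactorial (b - k) k * risingFactorial b m := by
    rw [risingFactorial_add, sub_add_cancel]
  rw [hneg, hsplit_left, hsplit_right, pow_add, pow_add, neg_pow, one_div_pow]
  field_simp
  rw [← pow_mul, pow_mul', neg_one_sq, one_pow, mul_one]

/-- The hypergeometric expression of `S₂`:
`S₂(n) = -2^(2n+1)·3^(4n+2)·(1/2-n)_{2n+1} ·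
  Σ_{k=0}^{2n+1} ((-2n-1)_k (n+3/2)_k / ((1/2-n)_k k!)) (1/9)^k`. -/
theorem stmt_9 (n : ℕ) :
    (S₂ n : ℚ) = -(2 ^ (2 * n + 1)) * 3 ^ (4 * n + 2)
      * risingFactorial ((1 / 2 : ℚ) - n) (2 * n + 1)
      * ∑ k ∈ range (2 * n + 2),
          risingFactorial (-2 * (n : ℚ) - 1) k * risingFactorial ((n : ℚ) + 3 / 2) k
            / (risingFactorial ((1 / 2 : ℚ) - n) k * (Nat.factorial k : ℚ))
            * (1 / 9 : ℚ) ^ k := by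
  have hb : (1 / 2 : ℚ) - n = n + 3 / 2 - (2 * n + 1 : ℕ) := by push_cast; ring
  have hN : -2 * (n : ℚ) - 1 = -(2 * n + 1 : ℕ) := by push_cast; ring
  have hnine : (3 : ℚ) ^ (4 * n + 2) = 9 ^ (2 * n + 1) := by
    rw [show 4 * n + 2 = 2 * (2 * n + 1) by ring, pow_mul]
    norm_num
  rw [S₂_eq_sum_risingFactorial, ← sum_range_reflect, mul_sum, mul_sum, hb, hN, hnine]
  refine sum_congr rfl fun m hm => ?_
  have hkm : 2 * n + 2 - 1 - m + m = 2 * n + 1 := by have := mem_range.mp hm; omega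
  have hm_ne : risingFactorial (n + 3 / 2 - (2 * n + 1 : ℕ)) m ≠ 0 := by
    rw [← hb, show (1 / 2 : ℚ) - n = ((-n : ℤ) : ℚ) + 1 / 2 by push_cast; ring]
    exact risingFactorial_intCast_add_half_ne_zero _ _
  rw [choose_mul_risingFactorial_eq_hypergeometric_term _ 9 (by norm_num) hkm hm_ne,
    Odd.neg_one_pow ⟨n, rfl⟩]
  ring
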